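/- For every bounded continuous section f of π, every y ∈ Y and all 0 < t < s, one has (iD⁺f(y, t))² · (s − t)/(2st) ≤ iQ_t f(y) − iQ_s f(y) ≤ (iD⁻f(y, s))² · (s − t)/(2st). -/

import Mathlib

open Metric Set Filter Topology MeasureTheory

/-- `F(t,y,z) = max_j f_j(z) + d(f(z), π⁻¹(y))² / (2t)`. -/
noncomputable def hlF {κ : ℕ} (Y : Set (EuclideanSpace ℝ (Fin κ)))
    (π : EuclideanSpace ℝ (Fin κ) → Y) (f : Y → EuclideanSpace ℝ (Fin κ))
    (t : ℝ) (y z : Y) : ℝ :=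
  (⨆ j, f z j) + (Metric.infDist (f z) (π ⁻¹' {y}))^2 / (2*t)

/-- The intrinsic Hopf–Lax semigroup `iQ_t f(y) = inf_{z ∈ Y} F(t,y,z)`. -/
noncomputable def iQ {κ : ℕ} (Y : Set (EuclideanSpace ℝ (Fin κ)))
    (π : EuclideanSpace ℝ (Fin κ) → Y) (f : Y → EuclideanSpace ℝ (Fin κ))
    (t : ℝ) (y : Y) : ℝ :=
  ⨅ z : Y, hlF Y π f t y z

/-- A minimizing sequence for `iQ_t f(y)`. -/
def IsMinSeq {κ : ℕ} (Y : Set (EuclideanSpace ℝ (Fin κ)))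
    (π : EuclideanSpace ℝ (Fin κ) → Y) (f : Y → EuclideanSpace ℝ (Fin κ))
    (t : ℝ) (y : Y) (u : ℕ → Y) : Prop :=
  Filter.Tendsto (fun n => hlF Y π f t y (u n)) Filter.atTop (nhds (iQ Y π f t y))

/-- `iD⁺f(y,t)`. -/
noncomputable def iDp {κ : ℕ} (Y : Set (EuclideanSpace ℝ (Fin κ)))
    (π : EuclideanSpace ℝ (Fin κ) → Y) (f : Y → EuclideanSpace ℝ (Fin κ))
    (y : Y) (t : ℝ) : ℝ :=
  sSup { a : ℝ | ∃ u : ℕ → Y, IsMinSeq Y π f t y u ∧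
    a = Filter.limsup (fun n => Metric.infDist (f (u n)) (π ⁻¹' {y})) Filter.atTop }

/-- `iD⁻f(y,t)`. -/
noncomputable def iDm {κ : ℕ} (Y : Set (EuclideanSpace ℝ (Fin κ)))
    (π : EuclideanSpace ℝ (Fin κ) → Y) (f : Y → EuclideanSpace ℝ (Fin κ))
    (y : Y) (t : ℝ) : ℝ :=
  sInf { a : ℝ | ∃ u : ℕ → Y, IsMinSeq Y π f t y u ∧
    a = Filter.liminf (fun n => Metric.infDist (f (u n)) (π ⁻¹' {y})) Filter.atTop }

/-!
Write `F_t(z) = φ(z) + g(z)²/(2t)` with `φ = max_j f_j` bounded below and `g = d(f(·), π⁻¹(y)) ≥ 0`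
bounded, and `c = (s - t)/(2st)`. Then `F_t = F_s + c g²`, so along a minimizing sequence `(z_n)`
for `Q_t` we get `c g(z_n)² = F_t(z_n) - F_s(z_n) ≤ F_t(z_n) - Q_s → Q_t - Q_s`, and along a
minimizing sequence for `Q_s` we get `c g(z_n)² ≥ Q_t - F_s(z_n) → Q_t - Q_s`. Passing to the
limsup, resp. liminf, and then to the supremum, resp. infimum, over minimizing sequences gives the
two inequalities.
-/

namespace Filter

variable {ι : Type*} {l : Filter ι} [l.NeBot] {a b : ι → ℝ} {B : ℝ}

theorem limsup_sq_le_of_sq_le_of_tendsto (ha : 0 ≤ᶠ[l] a) (hab : ∀ᶠ i in l, a i ^ 2 ≤ b i)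
    (hb : Tendsto b l (𝓝 B)) : 0 ≤ limsup a l ∧ limsup a l ^ 2 ≤ B := by
  have hB : 0 ≤ B := ge_of_tendsto hb (hab.mono fun i h => (sq_nonneg _).trans h)
  have hle : a ≤ᶠ[l] fun i => √(b i) := hab.mono fun i h => (le_abs_self _).trans (Real.abs_le_sqrt h)
  have hbdd : IsBoundedUnder (· ≤ ·) l a := hb.sqrt.isBoundedUnder_le.mono_le hle
  have h0 : 0 ≤ limsup a l := le_limsup_of_frequently_le ha.frequently hbdd
  refine ⟨h0, (Real.le_sqrt h0 hB).1 ?_⟩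
  calc limsup a l ≤ limsup (fun i => √(b i)) l :=
        limsup_le_limsup hle (isBoundedUnder_of_eventually_ge ha).isCoboundedUnder_le
          hb.sqrt.isBoundedUnder_le
    _ = √B := hb.sqrt.limsup_eq

theorem le_liminf_sq_of_le_sq_of_tendsto (ha : 0 ≤ᶠ[l] a) (ha' : IsBoundedUnder (· ≤ ·) l a)
    (hab : ∀ᶠ i in l, b i ≤ a i ^ 2) (hb : Tendsto b l (𝓝 B)) :
    0 ≤ liminf a l ∧ B ≤ liminf a l ^ 2 := by
  have hle : (fun i => √(b i)) ≤ᶠ[l] a :=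
    (ha.and hab).mono fun i ⟨h0, h⟩ => (Real.sqrt_le_left h0).2 h
  refine Real.sqrt_le_iff.1 ?_
  calc √B = liminf (fun i => √(b i)) l := hb.sqrt.liminf_eq.symm
    _ ≤ liminf a l := liminf_le_liminf hle hb.sqrt.isBoundedUnder_ge ha'.isCoboundedUnder_ge

end Filter

namespace Real

variable {S : Set ℝ} {B : ℝ}

theorem csSup_sq_le (hS : S.Nonempty) (h : ∀ a ∈ S, 0 ≤ a ∧ a ^ 2 ≤ B) : sSup S ^ 2 ≤ B := by
  obtain ⟨a₀, ha₀⟩ := hS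
  have hB : 0 ≤ B := (sq_nonneg _).trans (h a₀ ha₀).2
  have hle : ∀ a ∈ S, a ≤ √B := fun a ha => (le_sqrt (h a ha).1 hB).2 (h a ha).2
  have h0 : 0 ≤ sSup S := (h a₀ ha₀).1.trans (le_csSup ⟨√B, hle⟩ ha₀)
  exact (le_sqrt h0 hB).1 (csSup_le ⟨a₀, ha₀⟩ hle)

theorem le_csInf_sq (hS : S.Nonempty) (h : ∀ a ∈ S, 0 ≤ a ∧ B ≤ a ^ 2) : B ≤ sInf S ^ 2 :=
  (sqrt_le_iff.1 (le_csInf hS fun a ha => sqrt_le_iff.2 (h a ha))).2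

end Real

theorem EuclideanSpace.neg_norm_le_iSup_apply {ι : Type*} [Fintype ι] (x : EuclideanSpace ℝ ι) :
    -‖x‖ ≤ ⨆ i, x i := by
  rcases isEmpty_or_nonempty ι with hι | ⟨⟨i⟩⟩
  · simp [Real.iSup_of_isEmpty]
  · exact (neg_le_of_abs_le (PiLp.norm_apply_le x i)).trans (le_ciSup (Finite.bddAbove_range _) i)

theorem exists_tendsto_comp_iInf {Z : Type*} [Nonempty Z] {F : Z → ℝ} (hF : BddBelow (range F)) :
    ∃ u : ℕ → Z, Tendsto (F ∘ u) atTop (𝓝 (⨅ z, F z)) := by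
  obtain ⟨v, -, hv, hvF⟩ := exists_seq_tendsto_sInf (range_nonempty F) hF
  choose u hu using hvF
  exact ⟨u, by rwa [← funext hu] at hv⟩

section HopfLax

variable {Z : Type*} {φ g : Z → ℝ} {t s : ℝ}

noncomputable def hopfLaxIntegrand (φ g : Z → ℝ) (t : ℝ) (z : Z) : ℝ := φ z + g z ^ 2 / (2 * t)

theorem hopfLaxIntegrand_eq_add (ht : 0 < t) (hs : 0 < s) (z : Z) :
    hopfLaxIntegrand φ g t z = hopfLaxIntegrand φ g s z + g z ^ 2 * ((s - t) / (2 * s * t)) := by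
  unfold hopfLaxIntegrand
  field_simp
  ring

theorem bddBelow_range_hopfLaxIntegrand (hφ : BddBelow (range φ)) (ht : 0 < t) :
    BddBelow (range (hopfLaxIntegrand φ g t)) := by
  obtain ⟨m, hm⟩ := hφ
  refine ⟨m, forall_mem_range.2 fun z => ?_⟩
  have hgz : 0 ≤ g z ^ 2 / (2 * t) := by positivity
  have hφz : m ≤ φ z := hm (mem_range_self z)
  unfold hopfLaxIntegrand
  linarith

theorem limsup_sq_le_of_tendsto_iInf (hφ : BddBelow (range φ)) (hg : ∀ z, 0 ≤ g z)
    (ht : 0 < t) (hts : t < s) {u : ℕ → Z}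
    (hu : Tendsto (hopfLaxIntegrand φ g t ∘ u) atTop (𝓝 (⨅ z, hopfLaxIntegrand φ g t z))) :
    0 ≤ limsup (g ∘ u) atTop ∧ limsup (g ∘ u) atTop ^ 2 ≤
      ((⨅ z, hopfLaxIntegrand φ g t z) - ⨅ z, hopfLaxIntegrand φ g s z) / ((s - t) / (2 * s * t)) := by
  have hs : 0 < s := ht.trans hts
  have hc : 0 < (s - t) / (2 * s * t) := div_pos (sub_pos.2 hts) (by positivity)
  refine limsup_sq_le_of_sq_le_of_tendsto (.of_forall fun n => hg (u n))
    (.of_forall fun n => ?_) ((hu.sub_const _).div_const _)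
  have hQs := ciInf_le (bddBelow_range_hopfLaxIntegrand (g := g) hφ hs) (u n)
  have hF := hopfLaxIntegrand_eq_add (φ := φ) (g := g) ht hs (u n)
  rw [le_div_iff₀ hc]
  simp only [Function.comp_apply]
  linarith

theorem le_liminf_sq_of_tendsto_iInf (hφ : BddBelow (range φ)) (hg : ∀ z, 0 ≤ g z)
    (hg' : BddAbove (range g)) (ht : 0 < t) (hts : t < s) {u : ℕ → Z}
    (hu : Tendsto (hopfLaxIntegrand φ g s ∘ u) atTop (𝓝 (⨅ z, hopfLaxIntegrand φ g s z))) :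
    0 ≤ liminf (g ∘ u) atTop ∧
      ((⨅ z, hopfLaxIntegrand φ g t z) - ⨅ z, hopfLaxIntegrand φ g s z) / ((s - t) / (2 * s * t)) ≤
        liminf (g ∘ u) atTop ^ 2 := by
  have hs : 0 < s := ht.trans hts
  have hc : 0 < (s - t) / (2 * s * t) := div_pos (sub_pos.2 hts) (by positivity)
  refine le_liminf_sq_of_le_sq_of_tendsto (.of_forall fun n => hg (u n))
    (hg'.mono (range_comp_subset_range u g)).isBoundedUnder_of_range
    (.of_forall fun n => ?_) ((hu.const_sub _).div_const _)
  have hQt := ciInf_le (bddBelow_range_hopfLaxIntegrand (g := g) hφ ht) (u n)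
  have hF := hopfLaxIntegrand_eq_add (φ := φ) (g := g) ht hs (u n)
  rw [div_le_iff₀ hc]
  simp only [Function.comp_apply]
  linarith

end HopfLax

theorem stmt_14_general (κ : ℕ)
    (Y : Set (EuclideanSpace ℝ (Fin κ)))
    (π : EuclideanSpace ℝ (Fin κ) → Y)
    (f : Y → EuclideanSpace ℝ (Fin κ))
    (hfb : Bornology.IsBounded (Set.range f))
    (y : Y) (t s : ℝ) (ht : 0 < t) (hts : t < s) :
    (iDp Y π f y t)^2 * (s - t) / (2*s*t) ≤ iQ Y π f t y - iQ Y π f s y ∧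
      iQ Y π f t y - iQ Y π f s y ≤ (iDm Y π f y s)^2 * (s - t) / (2*s*t) := by
  have : Nonempty Y := ⟨y⟩
  set g : Y → ℝ := fun z => infDist (f z) (π ⁻¹' {y})
  obtain ⟨R, hR⟩ := hfb.subset_closedBall 0
  have hφ : BddBelow (range fun z => ⨆ j, f z j) := ⟨-R, forall_mem_range.2 fun z =>
    (neg_le_neg (mem_closedBall_zero_iff.1 (hR (mem_range_self z)))).trans
      (EuclideanSpace.neg_norm_le_iSup_apply _)⟩
  have hg : ∀ z, 0 ≤ g z := fun z => infDist_nonneg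
  have hg' : BddAbove (range g) := by
    rw [show g = (infDist · (π ⁻¹' {y})) ∘ f from rfl, range_comp]
    exact ((lipschitz_infDist_pt _).isBounded_image hfb).bddAbove
  have hs : 0 < s := ht.trans hts
  have hc : 0 < (s - t) / (2 * s * t) := div_pos (sub_pos.2 hts) (by positivity)
  rw [mul_div_assoc, mul_div_assoc, ← le_div_iff₀ hc, ← div_le_iff₀ hc]
  constructor
  · obtain ⟨u, hu⟩ := exists_tendsto_comp_iInf (bddBelow_range_hopfLaxIntegrand (g := g) hφ ht)
    refine Real.csSup_sq_le ⟨_, u, hu, rfl⟩ ?_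
    rintro _ ⟨u, hu, rfl⟩
    exact limsup_sq_le_of_tendsto_iInf hφ hg ht hts hu
  · obtain ⟨u, hu⟩ := exists_tendsto_comp_iInf
      (bddBelow_range_hopfLaxIntegrand (g := g) hφ hs)
    refine Real.le_csInf_sq ⟨_, u, hu, rfl⟩ ?_
    rintro _ ⟨u, hu, rfl⟩
    exact le_liminf_sq_of_tendsto_iInf hφ hg hg' ht hts hu

theorem stmt_14 (κ : ℕ) (hκ : 1 ≤ κ)
    (Y : Set (EuclideanSpace ℝ (Fin κ))) (hY : Y.Nonempty) (hYb : Bornology.IsBounded Y)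
    (π : EuclideanSpace ℝ (Fin κ) → Y) (hπc : Continuous π) (hπo : IsOpenMap π)
    (hπs : Function.Surjective π)
    (f : Y → EuclideanSpace ℝ (Fin κ)) (hfc : Continuous f)
    (hfb : Bornology.IsBounded (Set.range f)) (hsec : ∀ y : Y, π (f y) = y)

    (y : Y) (t s : ℝ) (ht : 0 < t) (hts : t < s) :
    (iDp Y π f y t)^2 * (s - t) / (2*s*t) ≤ iQ Y π f t y - iQ Y π f s y ∧
      iQ Y π f t y - iQ Y π f s y ≤ (iDm Y π f y s)^2 * (s - t) / (2*s*t) :=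
  stmt_14_general κ Y π f hfb y t s ht hts
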